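/- arXiv:2109.13559 — 2 statements merged into one kernel-verified Lean document; each statement's English description precedes it below -/
import Mathlib

section
/- For every p ≥ 0, the point (0, (a+p)/b) is a Lyapunov-stable equilibrium of the system ẏ = (a - b·k)·y, k̇ = b·y²: for every ε > 0 there exists δ > 0 such that any solution with initial condition within distance δ of (0, (a+p)/b) stays within distance ε of (0, (a+p)/b) for all future times. -/
/-!
With `b * c = a + p`, the function `V = y² + (k - c)²` satisfies `V' = -2 p y² ≤ 0` along
solutions, so it is nonincreasing; since `√V` is the distance to `(0, c)`, δ = ε works.
-/

open Set

theorem antitoneOn_Ici_of_hasDerivAt_nonpos {f f' : ℝ → ℝ} {t₀ : ℝ}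
    (hf : ∀ t ≥ t₀, HasDerivAt f (f' t) t) (hf' : ∀ t ≥ t₀, f' t ≤ 0) :
    AntitoneOn f (Ici t₀) := by
  refine antitoneOn_of_hasDerivWithinAt_nonpos (convex_Ici t₀)
    (fun t ht => (hf t ht).continuousAt.continuousWithinAt)
    (fun t ht => (hf t ?_).hasDerivWithinAt) (fun t ht => hf' t ?_)
  all_goals rw [interior_Ici] at ht; exact le_of_lt ht

theorem hasDerivAt_lyapunov {a b c p : ℝ} (hc : b * c = a + p) {y k : ℝ → ℝ} {t : ℝ}
    (hy : HasDerivAt y ((a - b * k t) * y t) t) (hk : HasDerivAt k (b * y t ^ 2) t) :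
    HasDerivAt (fun s => y s ^ 2 + (k s - c) ^ 2) (-(2 * p) * y t ^ 2) t := by
  refine ((hy.pow 2).add ((hk.sub_const c).pow 2)).congr_deriv ?_
  linear_combination -2 * y t ^ 2 * hc

theorem lyapunov_stability (a b p : ℝ) (hb : b ≠ 0) (hp : 0 ≤ p) :
    ∀ ε > 0, ∃ δ > 0,
      ∀ (t₀ : ℝ) (y k : ℝ → ℝ),
        (∀ t ≥ t₀, HasDerivAt y ((a - b * k t) * y t) t) →
        (∀ t ≥ t₀, HasDerivAt k (b * (y t) ^ 2) t) →
        Real.sqrt ((y t₀) ^ 2 + (k t₀ - (a + p) / b) ^ 2) < δ →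
        ∀ t ≥ t₀,
          Real.sqrt ((y t) ^ 2 + (k t - (a + p) / b) ^ 2) < ε := by
  intro ε hε
  refine ⟨ε, hε, fun t₀ y k hy hk h₀ t ht => ?_⟩
  have hc : b * ((a + p) / b) = a + p := mul_div_cancel₀ _ hb
  have hV : AntitoneOn (fun s => y s ^ 2 + (k s - (a + p) / b) ^ 2) (Ici t₀) :=
    antitoneOn_Ici_of_hasDerivAt_nonpos (fun s hs => hasDerivAt_lyapunov hc (hy s hs) (hk s hs))
      (fun s _ => by nlinarith [sq_nonneg (y s)])
  exact (Real.sqrt_le_sqrt (hV self_mem_Ici ht ht)).trans_lt h₀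
end

section
/- Suppose b > 0 and let (y(t), k(t)) be a global solution of ẏ = (a - b·k)·y, k̇ = b·y² with y(t₀) ≠ 0. Then lim_{t→∞} k(t) exists and satisfies a/b < lim_{t→∞} k(t); in particular a - b·k(t) is eventually negative. -/
/-!
With `c = a / b`, the quantity `y² + (k - c)²` is a first integral, so the orbit stays on the circle
`y² + (k - c)² = r` through its initial point. Since `k' = b y² ≥ 0`, `k` increases and,
being bounded by the circle, converges to some `L`. A convergent function cannot have a derivative
with a positive limit, and `k' = b (r - (k - c)²) → b (r - (L - c)²)`, so `(L - c)² ≥ r > 0`;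
as `k` increases towards `L`, the limit lies above the centre `c`.
-/

open Set Filter Topology

section RealDerivatives

variable {f f' : ℝ → ℝ} {T : ℝ}

lemma mul_sub_le_sub_of_le_hasDerivAt {C : ℝ} (hf : ∀ t ≥ T, HasDerivAt f (f' t) t)
    (hC : ∀ t ≥ T, C ≤ f' t) {s t : ℝ} (hs : T ≤ s) (hst : s ≤ t) :
    C * (t - s) ≤ f t - f s := by
  refine (convex_Ici T).mul_sub_le_image_sub_of_le_deriv
    (fun x hx => (hf x hx).continuousAt.continuousWithinAt) (fun x hx => ?_) (fun x hx => ?_)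
    s hs t (hs.trans hst) hst
  · rw [interior_Ici] at hx
    exact (hf x hx.le).differentiableAt.differentiableWithinAt
  · rw [interior_Ici] at hx
    exact (hf x hx.le).deriv ▸ hC x hx.le

lemma tendsto_atTop_of_le_hasDerivAt {δ : ℝ} (hδ : 0 < δ) (hf : ∀ t ≥ T, HasDerivAt f (f' t) t)
    (hδf : ∀ t ≥ T, δ ≤ f' t) : Tendsto f atTop atTop := by
  have hlin : Tendsto (fun t => f T + δ * (t - T)) atTop atTop :=
    tendsto_atTop_add_const_left _ _
      ((tendsto_atTop_add_const_right _ _ tendsto_id).const_mul_atTop hδ)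
  refine tendsto_atTop_mono' _ ?_ hlin
  filter_upwards [eventually_ge_atTop T] with t ht
  linarith [mul_sub_le_sub_of_le_hasDerivAt hf hδf le_rfl ht]

lemma nonpos_of_tendsto_of_hasDerivAt {L ℓ : ℝ} (hf : ∀ t ≥ T, HasDerivAt f (f' t) t)
    (hfL : Tendsto f atTop (𝓝 L)) (hf'ℓ : Tendsto f' atTop (𝓝 ℓ)) : ℓ ≤ 0 := by
  by_contra! hℓ
  obtain ⟨T', hT'⟩ := ((hf'ℓ.eventually (lt_mem_nhds (half_lt_self hℓ))).and
    (eventually_ge_atTop T)).exists_forall_of_atTop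
  have hT'T : T ≤ T' := (hT' T' le_rfl).2
  exact not_tendsto_nhds_of_tendsto_atTop (tendsto_atTop_of_le_hasDerivAt (half_pos hℓ)
    (fun t ht => hf t (hT'T.trans ht)) (fun t ht => (hT' t ht).1.le)) L hfL

lemma MonotoneOn.exists_tendsto_atTop_of_le (hmono : MonotoneOn f (Ici T)) {M : ℝ}
    (hM : ∀ t ≥ T, f t ≤ M) : ∃ L, Tendsto f atTop (𝓝 L) ∧ ∀ t ≥ T, f t ≤ L := by
  set g : Ici T → ℝ := fun t => f t
  have hbdd : BddAbove (range g) := ⟨M, by rintro _ ⟨t, rfl⟩; exact hM t t.2⟩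
  refine ⟨⨆ t, g t, tendsto_comp_val_Ici_atTop.mp (tendsto_atTop_ciSup ?_ hbdd),
    fun t ht => le_ciSup hbdd (⟨t, ht⟩ : Ici T)⟩
  exact fun s t hst => hmono s.2 t.2 hst

end RealDerivatives

section Orbit

variable {a b t₀ : ℝ} {y k : ℝ → ℝ}

lemma sq_add_sq_sub_div_eq (hb : b ≠ 0)
    (hy : ∀ t ≥ t₀, HasDerivAt y ((a - b * k t) * y t) t)
    (hk : ∀ t ≥ t₀, HasDerivAt k (b * (y t) ^ 2) t) {t : ℝ} (ht : t₀ ≤ t) :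
    y t ^ 2 + (k t - a / b) ^ 2 = y t₀ ^ 2 + (k t₀ - a / b) ^ 2 := by
  have hE : ∀ s ≥ t₀, HasDerivAt (fun s => y s ^ 2 + (k s - a / b) ^ 2) 0 s := fun s hs =>
    (((hy s hs).pow 2).add (((hk s hs).sub_const (a / b)).pow 2)).congr_deriv (by
      push_cast
      linear_combination (-2 * y s ^ 2) * mul_div_cancel₀ a hb)
  exact constant_of_has_deriv_right_zero
    (fun s hs => (hE s hs.1).continuousAt.continuousWithinAt)
    (fun s hs => (hE s hs.1).hasDerivWithinAt) t ⟨ht, le_rfl⟩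

end Orbit

theorem k_limit_above (a b t₀ : ℝ) (hb : 0 < b)
    (y k : ℝ → ℝ)
    (hy : ∀ t ≥ t₀, HasDerivAt y ((a - b * k t) * y t) t)
    (hk : ∀ t ≥ t₀, HasDerivAt k (b * (y t) ^ 2) t)
    (hy0 : y t₀ ≠ 0) :
    ∃ L : ℝ, Filter.Tendsto k Filter.atTop (nhds L) ∧ a / b < L ∧
      ∃ T ≥ t₀, ∀ t ≥ T, a - b * k t < 0 := by
  set c := a / b
  set r := y t₀ ^ 2 + (k t₀ - c) ^ 2
  have hcirc : ∀ t ≥ t₀, y t ^ 2 + (k t - c) ^ 2 = r := fun t ht =>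
    sq_add_sq_sub_div_eq hb.ne' hy hk ht
  have hmono : MonotoneOn k (Ici t₀) := fun s hs t _ hst => by
    nlinarith [mul_sub_le_sub_of_le_hasDerivAt hk (fun t _ => by positivity) hs hst]
  have hbdd : ∀ t ≥ t₀, k t ≤ c + √r := fun t ht => by
    linarith [le_abs_self (k t - c), Real.abs_le_sqrt (by nlinarith [hcirc t ht] : (k t - c) ^ 2 ≤ r)]
  obtain ⟨L, hkL, hkle⟩ := hmono.exists_tendsto_atTop_of_le hbdd
  have hk' : Tendsto (fun t => b * y t ^ 2) atTop (𝓝 (b * (r - (L - c) ^ 2))) := by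
    refine (((hkL.sub_const c).pow 2).const_sub r |>.const_mul b).congr' ?_
    filter_upwards [eventually_ge_atTop t₀] with t ht
    rw [← hcirc t ht]
    ring
  have hrL : r ≤ (L - c) ^ 2 := by
    nlinarith [nonpos_of_tendsto_of_hasDerivAt hk hkL hk']
  have hcL : c < L := by
    by_contra! hLc
    -- `k t₀ ≤ L ≤ c` would give `(L - c)² ≤ (k t₀ - c)² < r`.
    have hy0sq : 0 < y t₀ ^ 2 := by positivity
    nlinarith [hkle t₀ le_rfl]
  obtain ⟨T, hT⟩ := ((hkL.eventually (lt_mem_nhds hcL)).and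
    (eventually_ge_atTop t₀)).exists_forall_of_atTop
  refine ⟨L, hkL, hcL, T, (hT T le_rfl).2, fun t ht => ?_⟩
  have := (div_lt_iff₀' hb).mp (hT t ht).1
  linarith
end
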